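/- Let T₁ : V → W and T₂ : U → V be linear maps and G₂ an inner inverse of T₂. Then ker(T₁T₂) = G₂(ker T₁ ∩ im T₂) ⊕ ker T₂ (an internal direct sum). -/

import Mathlib

namespace LinearMap

variable {R M N : Type*} [Ring R] [AddCommGroup M] [Module R M] [AddCommGroup N] [Module R N]
  {T : M →ₗ[R] N} {G : N →ₗ[R] M}

theorem apply_apply_of_mem_range (hTGT : T ∘ₗ G ∘ₗ T = T) {v : N} (hv : v ∈ range T) :
    T (G v) = v := by
  obtain ⟨x, rfl⟩ := hv
  exact LinearMap.congr_fun hTGT x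

/-- Every `u` splits as `G (T u) + (u - G (T u))`, the second summand lying in `ker T`. -/
theorem comap_eq_map_inf_range_sup_ker (hTGT : T ∘ₗ G ∘ₗ T = T) (S : Submodule R N) :
    S.comap T = (S ⊓ range T).map G ⊔ ker T := by
  apply le_antisymm
  · intro u hu
    have hTu : T u ∈ S ⊓ range T := ⟨hu, u, rfl⟩
    have hker : u - G (T u) ∈ ker T := by
      rw [mem_ker, map_sub, apply_apply_of_mem_range hTGT hTu.2, sub_self]
    simpa using Submodule.add_mem_sup (Submodule.mem_map_of_mem (f := G) hTu) hker
  · refine sup_le ?_ (fun u hu => by simp [mem_ker.mp hu])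
    rintro _ ⟨v, hv, rfl⟩
    simpa [Submodule.mem_comap, apply_apply_of_mem_range hTGT hv.2] using hv.1

theorem disjoint_map_range_ker (hTGT : T ∘ₗ G ∘ₗ T = T) :
    Disjoint ((range T).map G) (ker T) := by
  rw [Submodule.disjoint_def]
  rintro _ ⟨v, hv, rfl⟩ hGv
  rw [← apply_apply_of_mem_range hTGT hv, mem_ker.mp hGv, map_zero]

end LinearMap

open LinearMap in
theorem ker_comp_eq_map_sup_ker {F U V W : Type*} [Field F]
    [AddCommGroup U] [Module F U] [AddCommGroup V] [Module F V]
    [AddCommGroup W] [Module F W]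
    (T₁ : V →ₗ[F] W) (T₂ : U →ₗ[F] V) (G₂ : V →ₗ[F] U)
    (h₂ : T₂ ∘ₗ G₂ ∘ₗ T₂ = T₂) :
    LinearMap.ker (T₁ ∘ₗ T₂) =
      Submodule.map G₂ (LinearMap.ker T₁ ⊓ LinearMap.range T₂) ⊔
        LinearMap.ker T₂ ∧
    Disjoint (Submodule.map G₂ (LinearMap.ker T₁ ⊓ LinearMap.range T₂))
      (LinearMap.ker T₂) := by
  refine ⟨?_, ?_⟩
  · rw [ker_comp]
    exact comap_eq_map_inf_range_sup_ker h₂ _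
  · exact (disjoint_map_range_ker h₂).mono_left (Submodule.map_mono inf_le_right)
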